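/- arXiv:2403.06761 — 5 statements merged into one kernel-verified Lean document; each statement's English description precedes it below -/
import Mathlib

section
/- Let ε, a ∈ ℝ with a ≠ 0, let x, v ∈ ℂ × ℂ, set c := ‖v‖ and δ := Im⟪x,v⟫, and assume a² = ε²/4 + c² − ε·δ. Let J : ℂ × ℂ → ℂ × ℂ be an ℝ-linear map satisfying J ∘ J = −id, J(i·w) = i·J(w) for all w ∈ ℂ × ℂ, and J x = (1/a)·(v − (ε/2)·(i·x)). Then the curve γ(t) := e^{iεt/2} · (exp(t·a·J))(x), where exp denotes the exponential of the ℝ-linear endomorphism and e^{iεt/2}· is componentwise complex scalar multiplication, satisfies γ(0) = x, γ'(0) = v, and the magnetic geodesic equation γ''(t) − ε·(i·γ'(t)) + (c² − ε·δ)·γ(t) = 0 for all t ∈ ℝ. -/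
/-!
Write `γ(t) = e^{ωt} · u(t)` with `ω = iε/2` and `u(t) = exp(tB) x`, `B = aJ`. Then `u' = Bu`, and
`B² = -a²` because `J² = -1`, so differentiating twice gives `γ'' - 2ωγ' + (ω² + a²)γ = 0`; by the
choice of `a`, `ω² + a² = a² - ε²/4 = c² - εδ`. The initial velocity is `ωx + aJx = v` by the
choice of `Jx`.
-/

open Complex

/-- The Hermitian inner product on `ℂ × ℂ`: `⟪x,v⟫ = conj x₁ * v₁ + conj x₂ * v₂`. -/
noncomputable def hInner (x v : ℂ × ℂ) : ℂ :=
  (starRingEnd ℂ) x.1 * v.1 + (starRingEnd ℂ) x.2 * v.2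

/-- The Euclidean norm on `ℂ × ℂ`: `‖x‖ = √(|x₁|² + |x₂|²)`. -/
noncomputable def hNorm (x : ℂ × ℂ) : ℝ :=
  Real.sqrt (Complex.normSq x.1 + Complex.normSq x.2)

theorem ofReal_smul_eq_smul {E : Type*} [AddCommGroup E] [Module ℝ E] [Module ℂ E]
    [IsScalarTower ℝ ℂ E] (r : ℝ) (y : E) : (r : ℂ) • y = r • y := by
  rw [← Complex.coe_algebraMap, algebraMap_smul]

section RotationCurve

variable {E : Type*} [NormedAddCommGroup E] [NormedSpace ℝ E] [NormedSpace ℂ E]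

noncomputable def rotationCurve (ω : ℂ) (B : E →L[ℝ] E) (y : E) (t : ℝ) : E :=
  cexp (ω * t) • NormedSpace.exp (t • B) y

theorem rotationCurve_zero (ω : ℂ) (B : E →L[ℝ] E) (y : E) : rotationCurve ω B y 0 = y := by
  simp [rotationCurve]

variable [IsScalarTower ℝ ℂ E]

theorem rotationCurve_smul (ω : ℂ) (B : E →L[ℝ] E) (μ : ℝ) (y : E) :
    rotationCurve ω B (μ • y) = (μ : ℂ) • rotationCurve ω B y := by
  ext t
  rw [Pi.smul_apply, rotationCurve, rotationCurve, map_smul, ofReal_smul_eq_smul]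
  exact smul_comm _ _ _

variable [CompleteSpace E]

theorem hasDerivAt_rotationCurve (ω : ℂ) (B : E →L[ℝ] E) (y : E) (t : ℝ) :
    HasDerivAt (rotationCurve ω B y)
      (ω • rotationCurve ω B y t + rotationCurve ω B (B y) t) t := by
  have hφ : HasDerivAt (fun s : ℝ => cexp (ω * s)) (ω * cexp (ω * t)) t := by
    simpa [mul_comm] using ((hasDerivAt_id (t : ℂ)).const_mul ω).cexp.comp_ofReal
  have hu : HasDerivAt (fun s : ℝ => NormedSpace.exp (s • B) y)
      (NormedSpace.exp (t • B) (B y)) t :=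
    (hasDerivAt_exp_smul_const B t).clm_apply (hasDerivAt_const t y) |>.congr_deriv (by simp)
  refine (hφ.smul hu).congr_deriv ?_
  simp only [rotationCurve, smul_smul, add_comm]

theorem deriv_rotationCurve (ω : ℂ) (B : E →L[ℝ] E) (y : E) :
    deriv (rotationCurve ω B y) = ω • rotationCurve ω B y + rotationCurve ω B (B y) :=
  funext fun t => (hasDerivAt_rotationCurve ω B y t).deriv

theorem rotationCurve_ode (ω : ℂ) (B : E →L[ℝ] E) (μ : ℝ) (hB : ∀ w, B (B w) = μ • w)
    (y : E) (t : ℝ) :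
    deriv (deriv (rotationCurve ω B y)) t - (2 * ω) • deriv (rotationCurve ω B y) t
      + (ω ^ 2 - μ) • rotationCurve ω B y t = 0 := by
  have h2 : deriv (deriv (rotationCurve ω B y)) t =
      ω • (ω • rotationCurve ω B y t + rotationCurve ω B (B y) t)
        + (ω • rotationCurve ω B (B y) t + (μ : ℂ) • rotationCurve ω B y t) := by
    rw [deriv_rotationCurve, ((hasDerivAt_rotationCurve ω B y t).const_smul ω).add
      (hasDerivAt_rotationCurve ω B (B y) t) |>.deriv, hB, rotationCurve_smul]
    rfl
  rw [h2, deriv_rotationCurve]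
  simp only [Pi.add_apply, Pi.smul_apply]
  module

end RotationCurve

theorem stmt_0_general (ε a : ℝ) (ha : a ≠ 0) (x v : ℂ × ℂ) (c δ : ℝ)
    (haa : a ^ 2 = ε ^ 2 / 4 + c ^ 2 - ε * δ)
    (J : (ℂ × ℂ) →L[ℝ] (ℂ × ℂ))
    (hJ2 : ∀ w, J (J w) = -w)
    (hJx : J x = (1 / a) • (v - (ε / 2) • (Complex.I • x)))
    (γ : ℝ → ℂ × ℂ)
    (hγ : ∀ t : ℝ, γ t =
      Complex.exp (Complex.I * ε * t / 2) • (NormedSpace.exp ((t * a) • J)) x) :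
    γ 0 = x ∧ deriv γ 0 = v ∧
      ∀ t : ℝ, deriv (deriv γ) t - ε • (Complex.I • deriv γ t)
        + (c ^ 2 - ε * δ) • γ t = 0 := by
  have hγ_eq : γ = rotationCurve (I * ε / 2) (a • J) x := by
    ext1 t
    rw [hγ, rotationCurve, mul_smul, mul_div_right_comm, div_mul_eq_mul_div]
  have hJJ : ∀ w, (a • J) ((a • J) w) = (-a ^ 2 : ℝ) • w := by
    intro w
    simp only [FunLike.coe_smul, Pi.smul_apply, map_smul, hJ2, smul_smul, smul_neg, neg_smul, sq]
  subst hγ_eq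
  refine ⟨rotationCurve_zero _ _ _, ?_, fun t => ?_⟩
  · rw [deriv_rotationCurve, Pi.add_apply, Pi.smul_apply, rotationCurve_zero, rotationCurve_zero,
      FunLike.coe_smul, Pi.smul_apply, hJx, smul_smul, mul_one_div_cancel ha, one_smul,
      ← ofReal_smul_eq_smul (ε / 2), smul_smul]
    push_cast
    module
  · have hscalar : (I * ε / 2) ^ 2 - ((-a ^ 2 : ℝ) : ℂ) = ((c ^ 2 - ε * δ : ℝ) : ℂ) := by
      have haa' : (a : ℂ) ^ 2 = ε ^ 2 / 4 + c ^ 2 - ε * δ := by exact_mod_cast haa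
      push_cast
      linear_combination haa' + (ε : ℂ) ^ 2 / 4 * I_sq
    have hode := rotationCurve_ode (I * ε / 2) (a • J) (-a ^ 2) hJJ x t
    rw [hscalar, ofReal_smul_eq_smul, show 2 * (I * ε / 2) = (ε : ℂ) * I by ring, ← smul_smul,
      ofReal_smul_eq_smul] at hode
    exact hode

theorem stmt_0 (ε a : ℝ) (ha : a ≠ 0) (x v : ℂ × ℂ) (c δ : ℝ)
    (hc : c = hNorm v) (hδ : δ = (hInner x v).im)
    (haa : a ^ 2 = ε ^ 2 / 4 + c ^ 2 - ε * δ)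
    (J : (ℂ × ℂ) →L[ℝ] (ℂ × ℂ))
    (hJ2 : ∀ w, J (J w) = -w)
    (hJi : ∀ w, J (Complex.I • w) = Complex.I • J w)
    (hJx : J x = (1 / a) • (v - (ε / 2) • (Complex.I • x)))
    (γ : ℝ → ℂ × ℂ)
    (hγ : ∀ t : ℝ, γ t =
      Complex.exp (Complex.I * ε * t / 2) • (NormedSpace.exp ((t * a) • J)) x) :
    γ 0 = x ∧ deriv γ 0 = v ∧
      ∀ t : ℝ, deriv (deriv γ) t - ε • (Complex.I • deriv γ t)
        + (c ^ 2 - ε * δ) • γ t = 0 :=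
  stmt_0_general ε a ha x v c δ haa J hJ2 hJx γ hγ
end

section
/- Let ε ∈ ℝ, x, v ∈ ℂ × ℂ, set c := ‖v‖, δ := Im⟪x,v⟫, and assume D := ε² + 4(c² − ε·δ) > 0. Set θ₊ := (ε + √D)/2, θ₋ := (ε − √D)/2, p₊ := −(θ₋·x + i·v)/(θ₊ − θ₋), and p₋ := (θ₊·x + i·v)/(θ₊ − θ₋). Then the curve γ(t) := e^{iθ₊t}·p₊ + e^{iθ₋t}·p₋ satisfies γ(0) = x, γ'(0) = v, and the magnetic geodesic equation γ''(t) − ε·(i·γ'(t)) + (c² − ε·δ)·γ(t) = 0 for all t ∈ ℝ; moreover every twice-differentiable curve η : ℝ → ℂ × ℂ satisfying this equation with η(0) = x and η'(0) = v equals γ. -/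
open Complex

/-!
Write `α = iθ₊` and `β = iθ₋`. Since `θ₊ + θ₋ = ε` and `θ₊θ₋ = -(c² - εδ)`, the equation reads
`y'' - (α + β) y' + αβ y = 0`, i.e. `(d/dt - β)(d/dt - α) y = 0`. Each `t ↦ e^{αt} p + e^{βt} q`
solves it, and `p₊, p₋` are the solution of the Vandermonde system `p₊ + p₋ = x`,
`α p₊ + β p₋ = v`. For uniqueness, the difference `y` of two solutions with the same initial data
has `u = y' - α y` with `u' = β u` and `u(0) = 0`, so `u = e^{βt} u(0) = 0`; then `y' = α y` with
`y(0) = 0` forces `y = 0` in the same way.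
-/

section LinearODE

variable {E : Type*} [NormedAddCommGroup E] [NormedSpace ℂ E]

theorem hasDerivAt_cexp_mul_ofReal (z : ℂ) (t : ℝ) :
    HasDerivAt (fun s : ℝ => exp (z * s)) (exp (z * t) * z) t := by
  simpa using ((ofRealCLM.hasDerivAt (x := t)).const_mul z).cexp

theorem eq_cexp_smul_of_hasDerivAt {u : ℝ → E} {β : ℂ} (hu : ∀ t, HasDerivAt u (β • u t) t)
    (t : ℝ) : u t = exp (β * t) • u 0 := by
  have hconst : ∀ s : ℝ, HasDerivAt (fun s : ℝ => exp (-β * s) • u s) 0 s := fun s =>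
    ((hasDerivAt_cexp_mul_ofReal (-β) s).smul (hu s)).congr_deriv (by module)
  have := is_const_of_deriv_eq_zero (fun s => (hconst s).differentiableAt)
    (fun s => (hconst s).deriv) t 0
  simp only [ofReal_zero, mul_zero, exp_zero, one_smul] at this
  rw [← this, smul_smul, ← exp_add]
  simp

theorem eq_zero_of_secondOrderODE {α β : ℂ} {y y' y'' : ℝ → E} (hy : ∀ t, HasDerivAt y (y' t) t)
    (hy' : ∀ t, HasDerivAt y' (y'' t) t)
    (hode : ∀ t, y'' t - (α + β) • y' t + (α * β) • y t = 0) (h0 : y 0 = 0) (h0' : y' 0 = 0) :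
    y = 0 := by
  have hfactor : ∀ t, HasDerivAt (fun s => y' s - α • y s) (β • (y' t - α • y t)) t := fun t =>
    ((hy' t).sub ((hy t).const_smul α)).congr_deriv
      (by linear_combination (norm := module) hode t)
  have hfirst : ∀ t, y' t = α • y t := fun t => by
    simpa [h0, h0', sub_eq_zero] using eq_cexp_smul_of_hasDerivAt hfactor t
  funext t
  have := eq_cexp_smul_of_hasDerivAt (fun t => hfirst t ▸ hy t) t
  rwa [h0, smul_zero] at this

theorem eq_of_secondOrderODE {α β : ℂ} {y y' y'' z z' z'' : ℝ → E}
    (hy : ∀ t, HasDerivAt y (y' t) t) (hy' : ∀ t, HasDerivAt y' (y'' t) t)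
    (hyode : ∀ t, y'' t - (α + β) • y' t + (α * β) • y t = 0)
    (hz : ∀ t, HasDerivAt z (z' t) t) (hz' : ∀ t, HasDerivAt z' (z'' t) t)
    (hzode : ∀ t, z'' t - (α + β) • z' t + (α * β) • z t = 0)
    (h0 : y 0 = z 0) (h0' : y' 0 = z' 0) : y = z :=
  sub_eq_zero.mp <|
    eq_zero_of_secondOrderODE (α := α) (β := β) (y := y - z) (fun t => (hy t).sub (hz t))
      (fun t => (hy' t).sub (hz' t))
      (fun t => by
        simp only [Pi.sub_apply]
        linear_combination (norm := module) hyode t - hzode t)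
      (sub_eq_zero.mpr h0) (sub_eq_zero.mpr h0')

noncomputable def expCurve (α β : ℂ) (p q : E) (t : ℝ) : E :=
  exp (α * t) • p + exp (β * t) • q

theorem hasDerivAt_expCurve (α β : ℂ) (p q : E) (t : ℝ) :
    HasDerivAt (expCurve α β p q) (expCurve α β (α • p) (β • q) t) t :=
  ((hasDerivAt_cexp_mul_ofReal α t).smul_const p).add
    ((hasDerivAt_cexp_mul_ofReal β t).smul_const q) |>.congr_deriv
    (by simp only [expCurve, mul_smul])

theorem deriv_expCurve (α β : ℂ) (p q : E) :
    deriv (expCurve α β p q) = expCurve α β (α • p) (β • q) :=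
  funext fun t => (hasDerivAt_expCurve α β p q t).deriv

theorem expCurve_zero (α β : ℂ) (p q : E) : expCurve α β p q 0 = p + q := by
  simp [expCurve]

theorem expCurve_ode (α β : ℂ) (p q : E) (t : ℝ) :
    expCurve α β (α • α • p) (β • β • q) t - (α + β) • expCurve α β (α • p) (β • q) t
      + (α * β) • expCurve α β p q t = 0 := by
  simp only [expCurve]
  module

end LinearODE

theorem vandermonde_add_eq {K E : Type*} [Field K] [AddCommGroup E] [Module K E] {a b : K}
    (hne : a ≠ b) (x w : E) : -((a - b)⁻¹ • (b • x + w)) + (a - b)⁻¹ • (a • x + w) = x := by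
  have : a - b ≠ 0 := sub_ne_zero.mpr hne
  match_scalars <;> field_simp <;> ring

section

variable {E : Type*} [AddCommGroup E] [Module ℂ E] [Module ℝ E] [IsScalarTower ℝ ℂ E]

theorem magnetic_eq_factored {ε b θp θm : ℝ} (hsum : θp + θm = ε) (hprod : θp * θm = -b)
    (a u y : E) :
    a - ε • (I • u) + b • y = a - (I * θp + I * θm) • u + ((I * θp) * (I * θm)) • y := by
  obtain rfl : b = -(θp * θm) := by linarith
  subst hsum
  rw [mul_mul_mul_comm, I_mul_I]
  match_scalars <;> simp only [Complex.coe_algebraMap] <;> ring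

theorem vandermonde_I_smul_add_eq {θp θm : ℝ} (hne : θp ≠ θm) (x v : E) :
    (I * θp) • -((θp - θm)⁻¹ • (θm • x + I • v)) + (I * θm) • ((θp - θm)⁻¹ • (θp • x + I • v))
      = v := by
  have : (θp : ℂ) - θm ≠ 0 := sub_ne_zero.mpr (by exact_mod_cast hne)
  match_scalars <;> simp only [Complex.coe_algebraMap] <;> field_simp
  · ring
  · linear_combination (-(θp : ℂ) + θm) * I_sq

end

theorem stmt_1_general (ε : ℝ) (x v : ℂ × ℂ) (c δ D : ℝ)
    (hD : D = ε ^ 2 + 4 * (c ^ 2 - ε * δ)) (hDpos : 0 < D)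
    (θp θm : ℝ) (hθp : θp = (ε + Real.sqrt D) / 2) (hθm : θm = (ε - Real.sqrt D) / 2)
    (pp pm : ℂ × ℂ)
    (hpp : pp = -((θp - θm)⁻¹ • (θm • x + Complex.I • v)))
    (hpm : pm = (θp - θm)⁻¹ • (θp • x + Complex.I • v))
    (γ : ℝ → ℂ × ℂ)
    (hγ : ∀ t : ℝ, γ t = Complex.exp (Complex.I * θp * t) • pp
        + Complex.exp (Complex.I * θm * t) • pm) :
    γ 0 = x ∧ deriv γ 0 = v ∧
      (∀ t : ℝ, deriv (deriv γ) t - ε • (Complex.I • deriv γ t)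
        + (c ^ 2 - ε * δ) • γ t = 0) ∧
      ∀ η : ℝ → ℂ × ℂ, Differentiable ℝ η → Differentiable ℝ (deriv η) →
        η 0 = x → deriv η 0 = v →
        (∀ t : ℝ, deriv (deriv η) t - ε • (Complex.I • deriv η t)
          + (c ^ 2 - ε * δ) • η t = 0) →
        η = γ := by
  have hne : θp ≠ θm := by
    have := Real.sqrt_pos.mpr hDpos
    rw [hθp, hθm]; linarith
  have hsum : θp + θm = ε := by rw [hθp, hθm]; ring
  have hprod : θp * θm = -(c ^ 2 - ε * δ) := by
    rw [hθp, hθm]; linear_combination (-1 / 4 : ℝ) * Real.sq_sqrt hDpos.le - hD / 4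
  simp_rw [magnetic_eq_factored hsum hprod]
  obtain rfl : γ = expCurve (I * θp) (I * θm) pp pm := funext hγ
  have hγ0 : expCurve (I * θp) (I * θm) pp pm 0 = x := by
    rw [expCurve_zero, hpp, hpm, vandermonde_add_eq hne]
  have hγ'0 : expCurve (I * θp) (I * θm) ((I * θp) • pp) ((I * θm) • pm) 0 = v := by
    rw [expCurve_zero, hpp, hpm, vandermonde_I_smul_add_eq hne]
  simp only [deriv_expCurve]
  refine ⟨hγ0, hγ'0, expCurve_ode _ _ _ _, fun η hη hη' hη0 hη'0 hηode => ?_⟩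
  exact eq_of_secondOrderODE (fun t => (hη t).hasDerivAt) (fun t => (hη' t).hasDerivAt) hηode
    (hasDerivAt_expCurve _ _ _ _) (hasDerivAt_expCurve _ _ _ _) (expCurve_ode _ _ _ _)
    (hη0.trans hγ0.symm) (hη'0.trans hγ'0.symm)

theorem stmt_1 (ε : ℝ) (x v : ℂ × ℂ) (c δ D : ℝ)
    (hc : c = hNorm v) (hδ : δ = (hInner x v).im)
    (hD : D = ε ^ 2 + 4 * (c ^ 2 - ε * δ)) (hDpos : 0 < D)
    (θp θm : ℝ) (hθp : θp = (ε + Real.sqrt D) / 2) (hθm : θm = (ε - Real.sqrt D) / 2)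
    (pp pm : ℂ × ℂ)
    (hpp : pp = -((θp - θm)⁻¹ • (θm • x + Complex.I • v)))
    (hpm : pm = (θp - θm)⁻¹ • (θp • x + Complex.I • v))
    (γ : ℝ → ℂ × ℂ)
    (hγ : ∀ t : ℝ, γ t = Complex.exp (Complex.I * θp * t) • pp
        + Complex.exp (Complex.I * θm * t) • pm) :
    γ 0 = x ∧ deriv γ 0 = v ∧
      (∀ t : ℝ, deriv (deriv γ) t - ε • (Complex.I • deriv γ t)
        + (c ^ 2 - ε * δ) • γ t = 0) ∧
      ∀ η : ℝ → ℂ × ℂ, Differentiable ℝ η → Differentiable ℝ (deriv η) →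
        η 0 = x → deriv η 0 = v →
        (∀ t : ℝ, deriv (deriv η) t - ε • (Complex.I • deriv η t)
          + (c ^ 2 - ε * δ) • η t = 0) →
        η = γ :=
  stmt_1_general ε x v c δ D hD hDpos θp θm hθp hθm pp pm hpp hpm γ hγ
end

section
/- Let p ≥ 1 be an odd integer and q ∈ ℤ with p ∤ q, and define j : ℂ × ℂ → ℂ × ℂ by j(z₁, z₂) := (i·z₁, −i·z₂). Let x, v ∈ ℂ × ℂ with ‖x‖ = 1, ‖v‖ = 1, and Re⟪x,v⟫ = 0. If the point cos(2πq/p)·x + sin(2πq/p)·(jx) lies in the real linear span of {x, v}, then the real linear span of {x, v} equals the real linear span of {x, jx}. In particular, the points x and cos(2πq/p)·x + sin(2πq/p)·(jx) are ℝ-linearly independent, and the unique great circle of S³ through these two points is the one through x in direction jx. -/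
open Complex

/-- The complex structure `j(z₁, z₂) = (i z₁, -i z₂)` on `ℂ × ℂ`. -/
noncomputable def jmap (z : ℂ × ℂ) : ℂ × ℂ :=
  (Complex.I * z.1, -(Complex.I * z.2))

/-!
Componentwise, `a • x + b • j x = ((a + b i) x₁, (a - b i) x₂)`, so `x` and `j x` are `ℝ`-linearly
independent as soon as `x ≠ 0`. For `p` odd and `p ∤ q` the angle `2πq/p` is not a multiple of `π`,
so its sine does not vanish; hence `x` and its rotate `cos θ • x + sin θ • j x` are independent,
and `j x` lies in any real span containing `x` and the rotate. By the exchange lemma this span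
`span {x, v}` is then `span {x, j x}`.
-/

lemma jmap_smul_add_smul (a b : ℝ) (x : ℂ × ℂ) :
    a • x + b • jmap x = ((a + b * I) * x.1, (a - b * I) * x.2) := by
  ext <;> simp [jmap, Complex.real_smul] <;> ring

lemma linearIndependent_jmap {x : ℂ × ℂ} (hx : x ≠ 0) : LinearIndependent ℝ ![x, jmap x] := by
  refine LinearIndependent.pair_iff.mpr fun a b hab => ?_
  rw [jmap_smul_add_smul, Prod.mk_eq_zero, mul_eq_zero, mul_eq_zero] at hab
  have hx' : x.1 ≠ 0 ∨ x.2 ≠ 0 := by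
    by_contra! h
    exact hx (Prod.ext h.1 h.2)
  rcases hx' with h | h
  · simpa [Complex.ext_iff] using hab.1.resolve_right h
  · simpa [Complex.ext_iff] using hab.2.resolve_right h

lemma Real.sin_two_pi_mul_div_ne_zero {p : ℕ} (hodd : Odd p) {q : ℤ} (hq : ¬ (p : ℤ) ∣ q) :
    Real.sin (2 * Real.pi * q / p) ≠ 0 := by
  rw [Ne, Real.sin_eq_zero_iff, not_exists]
  intro n hn
  have hp : (p : ℝ) ≠ 0 := by exact_mod_cast hodd.pos.ne'
  have hnp : n * (p : ℤ) = 2 * q := by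
    field_simp at hn
    exact_mod_cast hn
  have hcop : IsCoprime (p : ℤ) 2 :=
    Int.isCoprime_iff_gcd_eq_one.mpr (by simpa [Int.gcd] using hodd.coprime_two_right)
  exact hq (hcop.dvd_of_dvd_mul_left ⟨n, by rw [← hnp, mul_comm]⟩)

section LinearAlgebra

variable {K V : Type*} [Field K] [AddCommGroup V] [Module K V]

lemma LinearIndependent.pair_smul_add_smul {x y : V} (h : LinearIndependent K ![x, y]) (a : K)
    {b : K} (hb : b ≠ 0) : LinearIndependent K ![x, a • x + b • y] := by
  simpa using (LinearIndependent.pair_add_smul_add_smul_iff (R := K) 1 0 a b).mpr ⟨h, by simpa⟩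

lemma Submodule.span_pair_eq_of_mem {x y w : V} (h : LinearIndependent K ![x, w])
    (hw : w ∈ span K {x, y}) : span K {x, y} = span K {x, w} := by
  have hwx : w ∉ span K {x} := by
    rintro hwx
    obtain ⟨a, rfl⟩ := mem_span_singleton.mp hwx
    simpa using LinearIndependent.pair_iff.mp h a (-1) (by simp)
  have hy : y ∈ span K {x, w} := by
    rw [Set.pair_comm] at hw ⊢
    exact mem_span_insert_exchange hw hwx
  refine le_antisymm (span_le.mpr ?_) (span_le.mpr ?_) <;>
    simp [Set.insert_subset_iff, mem_span_of_mem, hy, hw]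

end LinearAlgebra

theorem stmt_5_general (p : ℕ) (hodd : Odd p) (q : ℤ) (hq : ¬ (p : ℤ) ∣ q)
    (x v : ℂ × ℂ) (hx : hNorm x = 1)
    (hmem : Real.cos (2 * Real.pi * q / p) • x + Real.sin (2 * Real.pi * q / p) • jmap x
      ∈ Submodule.span ℝ ({x, v} : Set (ℂ × ℂ))) :
    Submodule.span ℝ ({x, v} : Set (ℂ × ℂ))
      = Submodule.span ℝ ({x, jmap x} : Set (ℂ × ℂ)) ∧
    LinearIndependent ℝ
      ![x, Real.cos (2 * Real.pi * q / p) • x + Real.sin (2 * Real.pi * q / p) • jmap x] := by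
  set c := Real.cos (2 * Real.pi * q / p)
  set s := Real.sin (2 * Real.pi * q / p)
  have hs : s ≠ 0 := Real.sin_two_pi_mul_div_ne_zero hodd hq
  have hx0 : x ≠ 0 := by
    rintro rfl
    simp [hNorm] at hx
  have hjx : jmap x ∈ Submodule.span ℝ ({x, v} : Set (ℂ × ℂ)) := by
    have hx_mem : x ∈ Submodule.span ℝ ({x, v} : Set (ℂ × ℂ)) :=
      Submodule.mem_span_of_mem (by simp)
    convert Submodule.smul_mem _ s⁻¹ (Submodule.sub_mem _ hmem (Submodule.smul_mem _ c hx_mem))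
      using 1
    rw [add_sub_cancel_left, inv_smul_smul₀ hs]
  exact ⟨Submodule.span_pair_eq_of_mem (linearIndependent_jmap hx0) hjx,
    (linearIndependent_jmap hx0).pair_smul_add_smul c hs⟩

theorem stmt_5 (p : ℕ) (hp : 1 ≤ p) (hodd : Odd p) (q : ℤ) (hq : ¬ (p : ℤ) ∣ q)
    (x v : ℂ × ℂ) (hx : hNorm x = 1) (hv : hNorm v = 1) (hxv : (hInner x v).re = 0)
    (hmem : Real.cos (2 * Real.pi * q / p) • x + Real.sin (2 * Real.pi * q / p) • jmap x
      ∈ Submodule.span ℝ ({x, v} : Set (ℂ × ℂ))) :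
    Submodule.span ℝ ({x, v} : Set (ℂ × ℂ))
      = Submodule.span ℝ ({x, jmap x} : Set (ℂ × ℂ)) ∧
    LinearIndependent ℝ
      ![x, Real.cos (2 * Real.pi * q / p) • x + Real.sin (2 * Real.pi * q / p) • jmap x] :=
  stmt_5_general p hodd q hq x v hx hmem
end

section
/- Let ε, k ∈ ℝ and let γ : ℝ → ℂ × ℂ be a twice-differentiable curve with ‖γ(t)‖ = 1 for all t satisfying γ''(t) − ε·(i·γ'(t)) + k·γ(t) = 0. Then the speed t ↦ ‖γ'(t)‖ and the contact angle t ↦ Im( conj(γ₁(t))·γ₁'(t) + conj(γ₂(t))·γ₂'(t) ) are constant functions of t. -/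
/-!
On a complex inner product space, the equation `γ'' = ε i γ' - k γ` gives
`(‖γ'‖²)' = 2 Re⟪γ', γ''⟫ = -2k Re⟪γ', γ⟫` and `(Im⟪γ, γ'⟫)' = Im⟪γ, γ''⟫ = ε Re⟪γ, γ'⟫`,
because `⟪γ', i γ'⟫`, `⟪γ', γ'⟫` and `⟪γ, γ⟫` are imaginary or real. Both derivatives vanish since
a curve of constant norm has `Re⟪γ, γ'⟫ = 0`. The space `ℂ × ℂ` with `hNorm` is `WithLp 2 (ℂ × ℂ)`.
-/

open Complex

open scoped InnerProductSpace ComplexConjugate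

theorem Complex.im_eq_of_hasDerivAt {f f' : ℝ → ℂ} (hf : ∀ t, HasDerivAt f (f' t) t)
    (h : ∀ t, (f' t).im = 0) (s t : ℝ) : (f s).im = (f t).im :=
  is_const_of_deriv_eq_zero (f := fun t => (f t).im)
    (fun t => (imCLM.hasFDerivAt.comp_hasDerivAt t (hf t)).differentiableAt)
    (fun t => (h t) ▸ (imCLM.hasFDerivAt.comp_hasDerivAt t (hf t)).deriv) s t

theorem Complex.re_eq_of_hasDerivAt {f f' : ℝ → ℂ} (hf : ∀ t, HasDerivAt f (f' t) t)
    (h : ∀ t, (f' t).re = 0) (s t : ℝ) : (f s).re = (f t).re :=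
  is_const_of_deriv_eq_zero (f := fun t => (f t).re)
    (fun t => (reCLM.hasFDerivAt.comp_hasDerivAt t (hf t)).differentiableAt)
    (fun t => (h t) ▸ (reCLM.hasFDerivAt.comp_hasDerivAt t (hf t)).deriv) s t

section MagneticGeodesic

variable {E : Type*} [NormedAddCommGroup E] [InnerProductSpace ℂ E] {γ γ' γ'' : ℝ → E}

theorem re_inner_eq_zero_of_norm_eq (hγ : ∀ t, HasDerivAt γ (γ' t) t) {r : ℝ}
    (hr : ∀ t, ‖γ t‖ = r) (t : ℝ) : re ⟪γ t, γ' t⟫_ℂ = 0 := by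
  have hconst : (fun t => ⟪γ t, γ t⟫_ℂ) = fun _ => (r : ℂ) ^ 2 := by
    funext t; rw [inner_self_eq_norm_sq_to_K, hr]; rfl
  have hderiv := (hγ t).inner ℂ (hγ t)
  rw [hconst] at hderiv
  have h := congrArg re (hderiv.unique (hasDerivAt_const t _))
  rw [add_re, ← inner_conj_symm (γ' t), conj_re] at h
  simpa using h

theorem inner_eq_of_magnetic {ε k : ℝ} {v a w : E} (hode : w - ε • (I • v) + k • a = 0) (x : E) :
    ⟪x, w⟫_ℂ = ε • (I * ⟪x, v⟫_ℂ) - k • ⟪x, a⟫_ℂ := by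
  have hw : w = ε • (I • v) - k • a := by rw [← sub_eq_zero, ← hode]; abel
  rw [hw, inner_sub_right, inner_smul_right_eq_smul, inner_smul_right, inner_smul_right_eq_smul]

theorem norm_deriv_eq_of_magnetic {ε k r : ℝ} (hγ : ∀ t, HasDerivAt γ (γ' t) t)
    (hγ' : ∀ t, HasDerivAt γ' (γ'' t) t) (hode : ∀ t, γ'' t - ε • (I • γ' t) + k • γ t = 0)
    (hr : ∀ t, ‖γ t‖ = r) (s t : ℝ) : ‖γ' s‖ = ‖γ' t‖ := by
  have hderiv : ∀ t, re (⟪γ' t, γ'' t⟫_ℂ + ⟪γ'' t, γ' t⟫_ℂ) = 0 := by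
    intro t
    have hre : re ⟪γ' t, γ t⟫_ℂ = 0 := by
      rw [← inner_conj_symm, conj_re]; exact re_inner_eq_zero_of_norm_eq hγ hr t
    rw [add_re, ← inner_conj_symm (γ'' t), conj_re, inner_eq_of_magnetic (hode t),
      inner_self_eq_norm_sq_to_K]
    simp [← ofReal_pow, hre]
  have h := re_eq_of_hasDerivAt (fun t => (hγ' t).inner ℂ (hγ' t)) hderiv s t
  simp only [inner_self_eq_norm_sq_to_K] at h
  norm_cast at h
  exact (sq_eq_sq₀ (norm_nonneg _) (norm_nonneg _)).1 h

theorem im_inner_deriv_eq_of_magnetic {ε k r : ℝ} (hγ : ∀ t, HasDerivAt γ (γ' t) t)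
    (hγ' : ∀ t, HasDerivAt γ' (γ'' t) t) (hode : ∀ t, γ'' t - ε • (I • γ' t) + k • γ t = 0)
    (hr : ∀ t, ‖γ t‖ = r) (s t : ℝ) : im ⟪γ s, γ' s⟫_ℂ = im ⟪γ t, γ' t⟫_ℂ := by
  refine im_eq_of_hasDerivAt (fun t => (hγ t).inner ℂ (hγ' t)) (fun t => ?_) s t
  rw [add_im, inner_eq_of_magnetic (hode t), inner_self_eq_norm_sq_to_K, inner_self_eq_norm_sq_to_K]
  simp [← ofReal_pow, re_inner_eq_zero_of_norm_eq hγ hr t]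

end MagneticGeodesic

theorem hNorm_eq_norm_toLp (x : ℂ × ℂ) : hNorm x = ‖WithLp.toLp 2 x‖ := by
  rw [WithLp.prod_norm_eq_of_L2, hNorm, normSq_eq_norm_sq, normSq_eq_norm_sq]
  rfl

theorem inner_toLp_toLp (x y : ℂ × ℂ) :
    ⟪WithLp.toLp 2 x, WithLp.toLp 2 y⟫_ℂ = conj x.1 * y.1 + conj x.2 * y.2 := by
  simp only [WithLp.prod_inner_apply, RCLike.inner_apply, mul_comm]

theorem HasDerivAt.prod_toLp {f : ℝ → ℂ × ℂ} {f' : ℂ × ℂ} {t : ℝ} (hf : HasDerivAt f f' t) :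
    HasDerivAt (fun t => WithLp.toLp 2 (f t)) (WithLp.toLp 2 f') t :=
  (WithLp.prodContinuousLinearEquiv 2 ℝ ℂ ℂ).symm.hasFDerivAt.comp_hasDerivAt t hf

theorem stmt_7 (ε k : ℝ) (γ : ℝ → ℂ × ℂ)
    (hdiff : Differentiable ℝ γ) (hdiff2 : Differentiable ℝ (deriv γ))
    (hsphere : ∀ t : ℝ, hNorm (γ t) = 1)
    (hode : ∀ t : ℝ, deriv (deriv γ) t - ε • (Complex.I • deriv γ t) + k • γ t = 0) :
    (∀ s t : ℝ, hNorm (deriv γ s) = hNorm (deriv γ t)) ∧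
    (∀ s t : ℝ,
      ((starRingEnd ℂ) (γ s).1 * (deriv γ s).1
        + (starRingEnd ℂ) (γ s).2 * (deriv γ s).2).im
      = ((starRingEnd ℂ) (γ t).1 * (deriv γ t).1
        + (starRingEnd ℂ) (γ t).2 * (deriv γ t).2).im) := by
  have hγ (t : ℝ) := (hdiff t).hasDerivAt.prod_toLp
  have hγ' (t : ℝ) := (hdiff2 t).hasDerivAt.prod_toLp
  have hodeLp (t : ℝ) : WithLp.toLp 2 (deriv (deriv γ) t) - ε • (I • WithLp.toLp 2 (deriv γ t))
      + k • WithLp.toLp 2 (γ t) = 0 := by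
    rw [← WithLp.toLp_smul, ← WithLp.toLp_smul, ← WithLp.toLp_smul, ← WithLp.toLp_sub,
      ← WithLp.toLp_add, hode t, WithLp.toLp_zero]
  have hr (t : ℝ) : ‖WithLp.toLp 2 (γ t)‖ = 1 := by rw [← hNorm_eq_norm_toLp, hsphere t]
  refine ⟨fun s t => ?_, fun s t => ?_⟩
  · simpa only [hNorm_eq_norm_toLp] using norm_deriv_eq_of_magnetic hγ hγ' hodeLp hr s t
  · simpa only [inner_toLp_toLp] using im_inner_deriv_eq_of_magnetic hγ hγ' hodeLp hr s t
end

section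
/- Let ε > 0 and let p ≥ 3 be an odd integer. Let γ : ℝ → ℂ × ℂ be a nonconstant twice-differentiable curve with ‖γ(t)‖ = 1 for all t, set c := ‖γ'(0)‖ and δ := Im( conj(γ₁(0))·γ₁'(0) + conj(γ₂(0))·γ₂'(0) ), and suppose γ''(t) − ε·(i·γ'(t)) + (c² − ε·δ)·γ(t) = 0 for all t. If there exists S > 0 such that (e^{2πi/p}·γ₁(t), e^{−2πi/p}·γ₂(t)) = γ(t + S) for all t ∈ ℝ, then γ₁ ≡ 0, or γ₂ ≡ 0, or S ≥ 2π/ε. -/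
open Complex

/-!
Split the characteristic polynomial of the linear ODE as `(λ - a)(λ - b)` with `a + b = ε`.
For each coordinate `h`, the function `w = h' - i b h` satisfies `w' = i a w`, so
`w = e^{iat} w(0)`; and if `w(0) = 0` then `h = e^{ibt} h(0)`. Hence a nonzero coordinate
twisted by `ζ` over the period `S` has `ζ = e^{iaS}` or `ζ = e^{ibS}`. The two coordinates are
twisted by `ζ` and `ζ⁻¹`, which differ because `p ≥ 3`, so together they use both roots and
`e^{iεS} = e^{i(a+b)S} = ζ ζ⁻¹ = 1`, i.e. `εS` is a positive multiple of `2π`.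
-/

open Polynomial in
theorem IsAlgClosed.exists_add_eq_and_mul_eq {k : Type*} [Field k] [IsAlgClosed k] (s q : k) :
    ∃ a b : k, a + b = s ∧ a * b = q := by
  obtain ⟨a, ha⟩ := IsAlgClosed.exists_root (C 1 * X ^ 2 + C (-s) * X + C q)
    (by rw [degree_quadratic one_ne_zero]; decide)
  refine ⟨a, s - a, by ring, ?_⟩
  simp only [IsRoot, eval_add, eval_mul, eval_C, eval_pow, eval_X] at ha
  linear_combination -ha

theorem eq_cexp_mul_of_hasDerivAt {w : ℝ → ℂ} {c : ℂ} (hw : ∀ t, HasDerivAt w (c * w t) t)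
    (t : ℝ) : w t = cexp (c * t) * w 0 := by
  have hzero : ∀ s : ℝ, HasDerivAt (fun s : ℝ => cexp (-(c * s)) * w s) 0 s := by
    intro s
    have hexp : HasDerivAt (fun s : ℝ => cexp (-(c * s))) (cexp (-(c * s)) * -c) s := by
      simpa using ((hasDerivAt_id s).ofReal_comp.const_mul c).neg.cexp
    exact (hexp.mul (hw s)).congr_deriv (by ring)
  have hconst := is_const_of_deriv_eq_zero (fun s => (hzero s).differentiableAt)
    (fun s => (hzero s).deriv) t 0
  simp only [ofReal_zero, mul_zero, neg_zero, Complex.exp_zero, one_mul] at hconst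
  rw [← hconst, ← mul_assoc, ← Complex.exp_add, add_neg_cancel, Complex.exp_zero, one_mul]

def TwistedPeriodic (h : ℝ → ℂ) (S : ℝ) (ζ : ℂ) : Prop :=
  ∀ t, h (t + S) = ζ * h t

theorem TwistedPeriodic.derivative {h h' : ℝ → ℂ} {S : ℝ} {ζ : ℂ} (hper : TwistedPeriodic h S ζ)
    (hh : ∀ t, HasDerivAt h (h' t) t) : TwistedPeriodic h' S ζ := by
  intro t
  have hshift : HasDerivAt (fun s => h (s + S)) (h' (t + S)) t := (hh (t + S)).comp_add_const t S
  rw [funext hper] at hshift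
  exact hshift.unique ((hh t).const_mul ζ)

theorem TwistedPeriodic.eq_zero_or_cexp_eq_of_ode {h h' h'' : ℝ → ℂ} {a b ζ : ℂ} {S : ℝ}
    (hh : ∀ t, HasDerivAt h (h' t) t) (hh' : ∀ t, HasDerivAt h' (h'' t) t)
    (hode : ∀ t, h'' t - (a + b) * I * h' t - a * b * h t = 0)
    (hper : TwistedPeriodic h S ζ) :
    (∀ t, h t = 0) ∨ cexp (a * I * S) = ζ ∨ cexp (b * I * S) = ζ := by
  set w : ℝ → ℂ := fun t => h' t - b * I * h t
  have hw : ∀ t, w t = cexp (a * I * t) * w 0 := by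
    refine eq_cexp_mul_of_hasDerivAt fun t => ?_
    refine ((hh' t).sub ((hh t).const_mul (b * I))).congr_deriv ?_
    linear_combination hode t + a * b * h t * Complex.I_sq
  have hwper : TwistedPeriodic w S ζ := fun t => by
    simp only [w, hper.derivative hh t, hper t]; ring
  by_cases hw0 : w 0 = 0
  · have hexp : ∀ t, h t = cexp (b * I * t) * h 0 := by
      refine eq_cexp_mul_of_hasDerivAt fun t => ?_
      have : w t = 0 := by rw [hw t, hw0, mul_zero]
      exact (hh t).congr_deriv (by linear_combination this)
    by_cases hh0 : h 0 = 0
    · exact .inl fun t => by rw [hexp t, hh0, mul_zero]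
    · refine .inr (.inr (mul_right_cancel₀ hh0 ?_))
      rw [← hexp, ← zero_add S, hper 0]
  · refine .inr (.inl (mul_right_cancel₀ hw0 ?_))
    rw [← hw, ← zero_add S, hwper 0]

theorem two_pi_le_of_cexp_mul_I_eq_one {x : ℝ} (hx : 0 < x) (h : cexp (x * I) = 1) :
    2 * Real.pi ≤ x := by
  obtain ⟨n, hn⟩ := Complex.exp_eq_one_iff.mp h
  have hxn : x = n * (2 * Real.pi) := by simpa using congrArg Complex.im hn
  have hn0 : (0 : ℝ) < n := by nlinarith [Real.pi_pos]
  have hn1 : (1 : ℝ) ≤ n := by exact_mod_cast (show (0 : ℤ) < n by exact_mod_cast hn0)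
  nlinarith [Real.pi_pos]

theorem cexp_two_pi_I_div_ne_cexp_neg {p : ℕ} (hp : 3 ≤ p) :
    cexp (2 * Real.pi * I / p) ≠ cexp (-(2 * Real.pi * I / p)) := by
  intro h
  have hprim := Complex.isPrimitiveRoot_exp p (by omega)
  have hsq : cexp (2 * Real.pi * I / p) ^ 2 = 1 := by
    rw [sq]; nth_rewrite 2 [h]; rw [← Complex.exp_add, add_neg_cancel, Complex.exp_zero]
  have := Nat.le_of_dvd two_pos ((hprim.pow_eq_one_iff_dvd 2).mp hsq)
  omega

theorem mul_eq_mul_of_eq_or_eq {M : Type*} [CommMagma M] {α β ζ ξ : M}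
    (hζ : α = ζ ∨ β = ζ) (hξ : α = ξ ∨ β = ξ) (hne : ζ ≠ ξ) : α * β = ζ * ξ := by
  rcases hζ with rfl | rfl <;> rcases hξ with rfl | rfl
  all_goals first | exact absurd rfl hne | rfl | exact mul_comm _ _

theorem TwistedPeriodic.eq_zero_or_cexp_eq_of_ode_comp {E : Type*} [NormedAddCommGroup E]
    [NormedSpace ℂ E] {γ : ℝ → E} {a b ζ : ℂ} {S : ℝ} (L : E →L[ℂ] ℂ)
    (hdiff : Differentiable ℝ γ) (hdiff2 : Differentiable ℝ (deriv γ))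
    (hode : ∀ t, deriv (deriv γ) t - ((a + b) * I) • deriv γ t - (a * b) • γ t = 0)
    (hper : TwistedPeriodic (fun t => L (γ t)) S ζ) :
    (∀ t, L (γ t) = 0) ∨ cexp (a * I * S) = ζ ∨ cexp (b * I * S) = ζ := by
  have hL : ∀ {u : ℝ → E}, Differentiable ℝ u →
      ∀ t, HasDerivAt (fun s => L (u s)) (L (deriv u t)) t := fun hu t =>
    (L.restrictScalars ℝ).hasFDerivAt.comp_hasDerivAt t (hu t).hasDerivAt
  refine hper.eq_zero_or_cexp_eq_of_ode (hL hdiff) (hL hdiff2) fun t => ?_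
  simpa [mul_assoc] using congrArg L (hode t)

theorem stmt_10_general (ε : ℝ) (hε : 0 < ε) (p : ℕ) (hp : 3 ≤ p)
    (γ : ℝ → ℂ × ℂ)
    (hdiff : Differentiable ℝ γ) (hdiff2 : Differentiable ℝ (deriv γ))
    (c δ : ℝ)
    (hode : ∀ t : ℝ, deriv (deriv γ) t - ε • (Complex.I • deriv γ t)
      + (c ^ 2 - ε * δ) • γ t = 0)
    (S : ℝ) (hS : 0 < S)
    (hequiv : ∀ t : ℝ,
      (Complex.exp (2 * Real.pi * Complex.I / p) * (γ t).1,
        Complex.exp (-(2 * Real.pi * Complex.I / p)) * (γ t).2) = γ (t + S)) :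
    (∀ t : ℝ, (γ t).1 = 0) ∨ (∀ t : ℝ, (γ t).2 = 0) ∨ S ≥ 2 * Real.pi / ε := by
  obtain ⟨a, b, hsum, hprod⟩ :=
    IsAlgClosed.exists_add_eq_and_mul_eq (ε : ℂ) (-((c ^ 2 - ε * δ : ℝ) : ℂ))
  have hode' : ∀ t, deriv (deriv γ) t - ((a + b) * I) • deriv γ t - (a * b) • γ t = 0 := by
    intro t
    rw [hsum, hprod, mul_smul, Complex.coe_smul, neg_smul, Complex.coe_smul, sub_neg_eq_add]
    exact hode t
  rcases TwistedPeriodic.eq_zero_or_cexp_eq_of_ode_comp (.fst ℂ ℂ ℂ) hdiff hdiff2 hode'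
    (fun t => (congrArg Prod.fst (hequiv t)).symm) with h1 | h1
  · exact .inl h1
  rcases TwistedPeriodic.eq_zero_or_cexp_eq_of_ode_comp (.snd ℂ ℂ ℂ) hdiff hdiff2 hode'
    (fun t => (congrArg Prod.snd (hequiv t)).symm) with h2 | h2
  · exact .inr (.inl h2)
  have hfull : cexp ((ε * S : ℝ) * I) = 1 :=
    calc cexp ((ε * S : ℝ) * I) = cexp (a * I * S) * cexp (b * I * S) := by
          rw [← Complex.exp_add]
          congr 1
          push_cast
          linear_combination -(S * I) * hsum
      _ = cexp (2 * Real.pi * I / p) * cexp (-(2 * Real.pi * I / p)) :=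
          mul_eq_mul_of_eq_or_eq h1 h2 (cexp_two_pi_I_div_ne_cexp_neg hp)
      _ = 1 := by rw [← Complex.exp_add, add_neg_cancel, Complex.exp_zero]
  refine .inr (.inr ?_)
  rw [ge_iff_le, div_le_iff₀ hε, mul_comm S]
  exact two_pi_le_of_cexp_mul_I_eq_one (by positivity) hfull

theorem stmt_10 (ε : ℝ) (hε : 0 < ε) (p : ℕ) (hp : 3 ≤ p) (hodd : Odd p)
    (γ : ℝ → ℂ × ℂ)
    (hdiff : Differentiable ℝ γ) (hdiff2 : Differentiable ℝ (deriv γ))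
    (hnonconst : ∃ s t : ℝ, γ s ≠ γ t)
    (hsphere : ∀ t : ℝ, hNorm (γ t) = 1)
    (c δ : ℝ) (hc : c = hNorm (deriv γ 0))
    (hδ : δ = ((starRingEnd ℂ) (γ 0).1 * (deriv γ 0).1
      + (starRingEnd ℂ) (γ 0).2 * (deriv γ 0).2).im)
    (hode : ∀ t : ℝ, deriv (deriv γ) t - ε • (Complex.I • deriv γ t)
      + (c ^ 2 - ε * δ) • γ t = 0)
    (S : ℝ) (hS : 0 < S)
    (hequiv : ∀ t : ℝ,
      (Complex.exp (2 * Real.pi * Complex.I / p) * (γ t).1,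
        Complex.exp (-(2 * Real.pi * Complex.I / p)) * (γ t).2) = γ (t + S)) :
    (∀ t : ℝ, (γ t).1 = 0) ∨ (∀ t : ℝ, (γ t).2 = 0) ∨ S ≥ 2 * Real.pi / ε :=
  stmt_10_general ε hε p hp γ hdiff hdiff2 c δ hode S hS hequiv
end
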